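/- Define P₀(s) for s > 0 by P₀(s) = ∫₀¹ p₀(s,λ) dλ where, with a = 3/(π²s) and y = λ^{1/2}, p₀(s,λ) = 1 if y ≤ a, p₀(s,λ) = 1 − 1/y + a/y² if a < y ≤ a(1−y)^{-1}, and p₀(s,λ) = 0 otherwise. Then P₀(s) = 1 if a ≥ 1; P₀(s) = −1 + 2a − 2a·log a if 1/4 ≤ a ≤ 1; and P₀(s) = −1 + 2a + 2√(1/4 − a) − 4a·log(1/2 + √(1/4 − a)) if 0 < a ≤ 1/4. -/

import Mathlib

open MeasureTheory

/-- p₀(s,λ): with a = 3/(π²s) and y = λ^{1/2}, equal to 1 if y ≤ a; 1 − 1/y + a/y² if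
a < y ≤ a(1−y)^{-1} (i.e. y(1−y) ≤ a); and 0 otherwise. -/
noncomputable def pZero (s lam : ℝ) : ℝ :=
  let a := 3 / (Real.pi ^ 2 * s); let y := Real.sqrt lam
  if y ≤ a then 1 else if y * (1 - y) ≤ a then 1 - 1 / y + a / y ^ 2 else 0

/-!
Write `y = √λ`. The integrand is `1` for `λ ≤ a²`; for `y > a` it equals
`1 - 1/y + a/y² = (a - y(1-y))/y²` where this is nonnegative and `0` elsewhere. In `λ` this density
`1 - 1/√λ + a/λ` has the primitive `λ - 2√λ + a log λ`. If `a ≥ 1/4` then `y(1-y) ≤ a` always;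
otherwise `a - y(1-y) = (y - r₁)(y - r₂)` with `r₁,₂ = 1/2 ∓ √(1/4 - a)`, the integrand vanishes on
`[r₁², r₂²]`, and `r₁ r₂ = a` turns the logarithms into the stated closed form.
-/

open Real Set

noncomputable def gapProfile (a y : ℝ) : ℝ :=
  if y ≤ a then 1 else if y * (1 - y) ≤ a then 1 - 1 / y + a / y ^ 2 else 0

lemma gapProfile_mem_Icc (a y : ℝ) : gapProfile a y ∈ Icc 0 1 := by
  unfold gapProfile
  split_ifs with hle hmul
  · simp
  · have hy : y ≠ 0 := by rintro rfl; simp at hmul; linarith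
    have hy2 : 0 < y ^ 2 := by positivity
    constructor
    · rw [show 1 - 1 / y + a / y ^ 2 = (a - y * (1 - y)) / y ^ 2 by field_simp; ring]
      exact div_nonneg (by linarith) hy2.le
    · rw [show 1 - 1 / y + a / y ^ 2 = 1 - (y - a) / y ^ 2 by field_simp; ring]
      linarith [div_nonneg (by linarith : 0 ≤ y - a) hy2.le]
  · simp

lemma measurable_gapProfile (a : ℝ) : Measurable (gapProfile a) := by
  unfold gapProfile
  exact Measurable.ite (measurableSet_le measurable_id measurable_const) measurable_const
    (.ite (measurableSet_le (by fun_prop) measurable_const) (by fun_prop) measurable_const)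

lemma intervalIntegrable_gapProfile_sqrt (a p q : ℝ) :
    IntervalIntegrable (fun x => gapProfile a √x) volume p q := by
  refine intervalIntegrable_iff.2 (Measure.integrableOn_of_bounded (M := 1) measure_Ioc_lt_top.ne
    ((measurable_gapProfile a).comp continuous_sqrt.measurable).aestronglyMeasurable
    (Filter.Eventually.of_forall fun x => ?_))
  have := gapProfile_mem_Icc a √x
  rw [Real.norm_eq_abs, abs_le]
  exact ⟨by linarith [this.1], this.2⟩

lemma sqrt_mem_Icc_of_mem_Icc_sq {p q x : ℝ} (hp : 0 ≤ p) (hpq : p ≤ q)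
    (hx : x ∈ Icc (p ^ 2) (q ^ 2)) : √x ∈ Icc p q :=
  ⟨Real.le_sqrt_of_sq_le hx.1, Real.sqrt_le_iff.2 ⟨hp.trans hpq, hx.2⟩⟩

lemma gapProfile_of_mul_le {a y : ℝ} (ha : 0 < a) (hay : a ≤ y) (hy : y * (1 - y) ≤ a) :
    gapProfile a y = 1 - 1 / y + a / y ^ 2 := by
  unfold gapProfile
  rcases hay.lt_or_eq with hay | rfl
  · rw [if_neg hay.not_ge, if_pos hy]
  · rw [if_pos le_rfl]
    field_simp
    ring

lemma gapProfile_of_le_mul {a y : ℝ} (ha : 0 < a) (hy : a ≤ y * (1 - y)) : gapProfile a y = 0 := by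
  have hy0 : 0 < y := by nlinarith
  have hay : a < y := by nlinarith
  unfold gapProfile
  rw [if_neg hay.not_ge]
  split_ifs with hmul
  · have : y * (1 - y) = a := le_antisymm hmul hy
    field_simp
    linarith
  · rfl

noncomputable def gapPrimitive (a x : ℝ) : ℝ := x - 2 * √x + a * log x

lemma hasDerivAt_gapPrimitive (a : ℝ) {x : ℝ} (hx : 0 < x) :
    HasDerivAt (gapPrimitive a) (1 - 1 / √x + a / x) x := by
  have hs : √x ≠ 0 := by positivity
  refine (((hasDerivAt_id x).sub ((hasDerivAt_sqrt hx.ne').const_mul 2)).add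
    ((hasDerivAt_log hx.ne').const_mul a)).congr_deriv ?_
  field_simp

lemma gapPrimitive_sq (a : ℝ) {y : ℝ} (hy : 0 ≤ y) :
    gapPrimitive a (y ^ 2) = y ^ 2 - 2 * y + 2 * a * log y := by
  rw [gapPrimitive, sqrt_sq hy, log_pow]
  push_cast
  ring

lemma integral_gapProfile_sqrt_of_le {a q : ℝ} (hq : 0 ≤ q) (hqa : q ≤ a) :
    ∫ x in (0)..q ^ 2, gapProfile a √x = q ^ 2 := by
  rw [intervalIntegral.integral_congr (g := fun _ => 1) fun x hx => ?_]
  · simp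
  rw [uIcc_of_le (by positivity)] at hx
  exact if_pos ((sqrt_mem_Icc_of_mem_Icc_sq le_rfl hq (by simpa using hx)).2.trans hqa)

lemma integral_gapProfile_sqrt_of_mul_le {a p q : ℝ} (ha : 0 < a) (hap : a ≤ p) (hpq : p ≤ q)
    (h : ∀ y ∈ Icc p q, y * (1 - y) ≤ a) :
    ∫ x in p ^ 2..q ^ 2, gapProfile a √x = gapPrimitive a (q ^ 2) - gapPrimitive a (p ^ 2) := by
  have hp : 0 < p := ha.trans_le hap
  have hsq : p ^ 2 ≤ q ^ 2 := by gcongr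
  have hpos : ∀ x ∈ Icc (p ^ 2) (q ^ 2), 0 < x := fun x hx =>
    (by positivity : 0 < p ^ 2).trans_le hx.1
  rw [intervalIntegral.integral_congr (g := fun x => 1 - 1 / √x + a / x) fun x hx => ?_]
  · refine intervalIntegral.integral_eq_sub_of_hasDerivAt (fun x hx => ?_) ?_
    · rw [uIcc_of_le hsq] at hx
      exact hasDerivAt_gapPrimitive a (hpos x hx)
    · refine ContinuousOn.intervalIntegrable ?_
      rw [uIcc_of_le hsq]
      exact ContinuousOn.add (continuousOn_const.sub (continuousOn_const.div
        continuous_sqrt.continuousOn fun x hx => (sqrt_pos.2 (hpos x hx)).ne'))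
        (continuousOn_const.div continuousOn_id fun x hx => (hpos x hx).ne')
  · rw [uIcc_of_le hsq] at hx
    have hy := sqrt_mem_Icc_of_mem_Icc_sq hp.le hpq hx
    simp only
    rw [gapProfile_of_mul_le ha (hap.trans hy.1) (h _ hy), sq_sqrt (hpos x hx).le]

lemma integral_gapProfile_sqrt_of_le_mul {a p q : ℝ} (ha : 0 < a) (hp : 0 ≤ p) (hpq : p ≤ q)
    (h : ∀ y ∈ Icc p q, a ≤ y * (1 - y)) :
    ∫ x in p ^ 2..q ^ 2, gapProfile a √x = 0 := by
  have hsq : p ^ 2 ≤ q ^ 2 := by gcongr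
  rw [intervalIntegral.integral_congr (g := fun _ => 0) fun x hx => ?_]
  · simp
  rw [uIcc_of_le hsq] at hx
  exact gapProfile_of_le_mul ha (h _ (sqrt_mem_Icc_of_mem_Icc_sq hp hpq hx))

lemma integral_gapProfile_sqrt_of_one_le {a : ℝ} (ha : 1 ≤ a) :
    ∫ x in (0)..1, gapProfile a √x = 1 := by
  simpa using integral_gapProfile_sqrt_of_le zero_le_one ha

lemma integral_gapProfile_sqrt_of_quarter_le {a : ℝ} (h14 : 1 / 4 ≤ a) (h1 : a < 1) :
    ∫ x in (0)..1, gapProfile a √x = -1 + 2 * a - 2 * a * log a := by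
  have ha : 0 < a := by linarith
  have hmul : ∀ y ∈ Icc a 1, y * (1 - y) ≤ a := fun y _ => by nlinarith [sq_nonneg (y - 1 / 2)]
  calc ∫ x in (0)..1, gapProfile a √x
      = (∫ x in (0)..a ^ 2, gapProfile a √x) + ∫ x in a ^ 2..1 ^ 2, gapProfile a √x := by
        rw [one_pow, intervalIntegral.integral_add_adjacent_intervals
          (intervalIntegrable_gapProfile_sqrt ..) (intervalIntegrable_gapProfile_sqrt ..)]
    _ = a ^ 2 + (gapPrimitive a (1 ^ 2) - gapPrimitive a (a ^ 2)) := by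
        rw [integral_gapProfile_sqrt_of_le ha.le le_rfl,
          integral_gapProfile_sqrt_of_mul_le ha le_rfl h1.le hmul]
    _ = -1 + 2 * a - 2 * a * log a := by
        rw [gapPrimitive_sq a zero_le_one, gapPrimitive_sq a ha.le, log_one]
        ring

lemma integral_gapProfile_sqrt_of_lt_quarter {a : ℝ} (ha : 0 < a) (h14 : a < 1 / 4) :
    ∫ x in (0)..1, gapProfile a √x =
      -1 + 2 * a + 2 * √(1 / 4 - a) - 4 * a * log (1 / 2 + √(1 / 4 - a)) := by
  set e := √(1 / 4 - a)
  have he2 : e ^ 2 = 1 / 4 - a := sq_sqrt (by linarith)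
  have he : 0 < e := sqrt_pos.2 (by linarith)
  have he' : e < 1 / 2 := by nlinarith
  have hroots : ∀ y, a - y * (1 - y) = (y - (1 / 2 - e)) * (y - (1 / 2 + e)) := fun y => by
    linear_combination he2
  have hlog : log a = log (1 / 2 - e) + log (1 / 2 + e) := by
    rw [← log_mul (by linarith) (by linarith)]
    congr 1
    linear_combination he2
  have hmul₁ : ∀ y ∈ Icc a (1 / 2 - e), y * (1 - y) ≤ a := fun y hy => by
    nlinarith [hroots y, hy.2]
  have hmul₂ : ∀ y ∈ Icc (1 / 2 + e) 1, y * (1 - y) ≤ a := fun y hy => by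
    nlinarith [hroots y, hy.1]
  have hzero : ∀ y ∈ Icc (1 / 2 - e) (1 / 2 + e), a ≤ y * (1 - y) := fun y hy => by
    nlinarith [hroots y, hy.1, hy.2]
  have hae : a ≤ 1 / 2 - e := by nlinarith
  calc ∫ x in (0)..1, gapProfile a √x
      = (∫ x in (0)..a ^ 2, gapProfile a √x) + (∫ x in a ^ 2..(1 / 2 - e) ^ 2, gapProfile a √x)
        + (∫ x in (1 / 2 - e) ^ 2..(1 / 2 + e) ^ 2, gapProfile a √x)
        + ∫ x in (1 / 2 + e) ^ 2..1 ^ 2, gapProfile a √x := by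
        simp only [one_pow, intervalIntegral.integral_add_adjacent_intervals
          (intervalIntegrable_gapProfile_sqrt ..) (intervalIntegrable_gapProfile_sqrt ..)]
    _ = a ^ 2 + (gapPrimitive a ((1 / 2 - e) ^ 2) - gapPrimitive a (a ^ 2)) + 0
        + (gapPrimitive a (1 ^ 2) - gapPrimitive a ((1 / 2 + e) ^ 2)) := by
        rw [integral_gapProfile_sqrt_of_le ha.le le_rfl,
          integral_gapProfile_sqrt_of_mul_le ha le_rfl hae hmul₁,
          integral_gapProfile_sqrt_of_le_mul ha (by linarith) (by linarith) hzero,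
          integral_gapProfile_sqrt_of_mul_le ha (by linarith) (by linarith) hmul₂]
    _ = -1 + 2 * a + 2 * e - 4 * a * log (1 / 2 + e) := by
        rw [gapPrimitive_sq a zero_le_one, gapPrimitive_sq a ha.le,
          gapPrimitive_sq a (by linarith), gapPrimitive_sq a (by linarith), log_one, hlog]
        ring

theorem integral_gapProfile_sqrt {a : ℝ} (ha : 0 < a) :
    ∫ x in (0)..1, gapProfile a √x =
      if 1 ≤ a then 1
      else if 1 / 4 ≤ a then -1 + 2 * a - 2 * a * log a
      else -1 + 2 * a + 2 * √(1 / 4 - a) - 4 * a * log (1 / 2 + √(1 / 4 - a)) := by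
  split_ifs with h1 h14
  · exact integral_gapProfile_sqrt_of_one_le h1
  · exact integral_gapProfile_sqrt_of_quarter_le h14 (not_le.1 h1)
  · exact integral_gapProfile_sqrt_of_lt_quarter ha (not_le.1 h14)

/-- Hall's gap distribution P₀(s) = ∫₀¹ p₀(s,λ) dλ. -/
theorem hall_distribution (s : ℝ) (hs : 0 < s) :
    ∫ lam in Set.Ioc (0 : ℝ) 1, pZero s lam =
      (let a := 3 / (Real.pi ^ 2 * s)
        if 1 ≤ a then 1
        else if 1 / 4 ≤ a then -1 + 2 * a - 2 * a * Real.log a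
        else -1 + 2 * a + 2 * Real.sqrt (1 / 4 - a)
          - 4 * a * Real.log (1 / 2 + Real.sqrt (1 / 4 - a))) := by
  rw [← intervalIntegral.integral_of_le zero_le_one]
  -- `pZero s` unfolds to `fun lam => gapProfile (3 / (π ^ 2 * s)) √lam`
  exact integral_gapProfile_sqrt (by positivity)
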